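/- Under the root-subgroup data and Levi data hypotheses, suppose K ≤ G satisfies conditions (3.1) and (3.2), and K_L ≤ L satisfies conditions (3.1) and (3.2) with respect to L. Then L ∩ K = K_L if and only if: K_L ∩ U_α = K ∩ U_α for every α ∈ Φ_J ∩ Φ_red, and Z ∩ K_L = Z ∩ K. (Abstract form of the paper's Corollary characterizing when K ∩ L(F) = K_L.) -/

import Mathlib

open Pointwise

section AxiomaticFramework

variable {G : Type*} [Group G] {ι : Type*}

/-- The subgroup generated by the root subgroups `U α` for `α ∈ s`. -/
def genU (U : ι → Subgroup G) (s : Finset ι) : Subgroup G := ⨆ α ∈ s, U α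

/-- The multiplication map attached to an enumeration `l` of a set of roots is a
bijection from `∏ (K ∩ U α)` onto `K ∩ T`. -/
def ProdBij (U : ι → Subgroup G) (K T : Subgroup G) (l : List ι) : Prop :=
  Function.Injective
    (fun x : ∀ i : Fin l.length, ↥(K ⊓ U (l.get i)) =>
      (List.ofFn fun i => ((x i : G))).prod) ∧
  Set.range
    (fun x : ∀ i : Fin l.length, ↥(K ⊓ U (l.get i)) =>
      (List.ofFn fun i => ((x i : G))).prod)
    = ((K ⊓ T : Subgroup G) : Set G)

/-- Condition (3.1) for a subgroup `K`, relative to root subgroups `U`,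
reduced positive roots `PRp`, reduced negative roots `PRm`, `U⁺ = Up`, `U⁻ = Um`, `N`. -/
def Cond31 (U : ι → Subgroup G) (PRp PRm : Finset ι) (Up Um N K : Subgroup G) : Prop :=
  ((K : Set G) = ↑(K ⊓ Um) * ↑(K ⊓ Up) * ↑(K ⊓ N)) ∧
  ((K : Set G) = ↑(K ⊓ Up) * ↑(K ⊓ Um) * ↑(K ⊓ N)) ∧
  (∀ l : List ι, l.Nodup → (∀ a, a ∈ l ↔ a ∈ PRp) → ProdBij U K Up l) ∧
  (∀ l : List ι, l.Nodup → (∀ a, a ∈ l ↔ a ∈ PRm) → ProdBij U K Um l)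

/-- Condition (3.2) for a subgroup `K`. -/
def Cond32 (Up Um Z K : Subgroup G) : Prop :=
  (K : Set G) = ↑(K ⊓ Up) * ↑(K ⊓ Um) * ↑(K ⊓ Up) * ↑(K ⊓ Z)

/-- Root-subgroup data: a finite set of roots `Phi` with a distinguished subset `PhiRed`
and a partition `Phi = PhiP ⊔ PhiM`, root subgroups `U α`, and subgroups `Z ≤ N`. -/
structure RootData (G : Type*) [Group G] (ι : Type*) [DecidableEq ι] where
  Phi : Finset ι
  PhiRed : Finset ι
  PhiP : Finset ι
  PhiM : Finset ι
  red_sub : PhiRed ⊆ Phi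
  union_eq : PhiP ∪ PhiM = Phi
  disj : Disjoint PhiP PhiM
  U : ι → Subgroup G
  Z : Subgroup G
  N : Subgroup G
  hZN : Z ≤ N

variable [DecidableEq ι]

namespace RootData

variable (D : RootData G ι)

/-- `U⁺`, the subgroup generated by the `U α`, `α ∈ Φ⁺`. -/
def Up : Subgroup G := genU D.U D.PhiP

/-- `U⁻`, the subgroup generated by the `U α`, `α ∈ Φ⁻`. -/
def Um : Subgroup G := genU D.U D.PhiM

/-- Condition (3.1) with respect to `G`. -/
def cond31 (K : Subgroup G) : Prop :=
  Cond31 D.U (D.PhiRed ∩ D.PhiP) (D.PhiRed ∩ D.PhiM) D.Up D.Um D.N K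

/-- Condition (3.2) with respect to `G`. -/
def cond32 (K : Subgroup G) : Prop := Cond32 D.Up D.Um D.Z K

end RootData

/-- Levi data for given root-subgroup data. -/
structure LeviData (D : RootData G ι) where
  PhiJ : Finset ι
  J_sub : PhiJ ⊆ D.Phi
  L : Subgroup G
  Q : Subgroup G
  hZL : D.Z ≤ L
  /-- (i): `U α ≤ L` for `α ∈ Φ_J` -/
  hUL : ∀ α ∈ PhiJ, D.U α ≤ L
  /-- (i): `U_J⁺ = L ∩ U⁺` is generated by the `U α`, `α ∈ Φ_J⁺` -/
  hUJp : L ⊓ D.Up = genU D.U (PhiJ ∩ D.PhiP)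
  /-- (i): `U_J⁻ = L ∩ U⁻` is generated by the `U α`, `α ∈ Φ_J⁻` -/
  hUJm : L ⊓ D.Um = genU D.U (PhiJ ∩ D.PhiM)
  /-- (ii): `L` normalizes `V⁺` -/
  hLnormV : ∀ l ∈ L, ∀ v ∈ genU D.U (D.PhiP \ PhiJ), l * v * l⁻¹ ∈ genU D.U (D.PhiP \ PhiJ)
  /-- (ii): `V⁺ ∩ L = 1` -/
  hVL : genU D.U (D.PhiP \ PhiJ) ⊓ L = ⊥
  /-- (ii): `Q = V⁺L` -/
  hQ_VL : (Q : Set G) = ↑(genU D.U (D.PhiP \ PhiJ)) * ↑L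
  /-- (ii): `Q = LV⁺` -/
  hQ_LV : (Q : Set G) = ↑L * ↑(genU D.U (D.PhiP \ PhiJ))
  /-- (iii): `G = U⁻NU⁺` -/
  bruhat_cover : (↑D.Um * ↑D.N * ↑D.Up : Set G) = Set.univ
  /-- (iii): uniqueness of the `N`-component -/
  bruhat_uniq : ∀ u₁ n₁ v₁ u₂ n₂ v₂ : G, u₁ ∈ D.Um → n₁ ∈ D.N → v₁ ∈ D.Up →
    u₂ ∈ D.Um → n₂ ∈ D.N → v₂ ∈ D.Up → u₁ * n₁ * v₁ = u₂ * n₂ * v₂ → n₁ = n₂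
  /-- (iv): decomposition of `L` -/
  hLdec : (L : Set G) ⊆ ↑(L ⊓ D.Um) * ↑(L ⊓ D.N) * ↑(L ⊓ D.Up)
  /-- (v): `V⁻ ∩ Q = 1` -/
  hVmQ : genU D.U (D.PhiM \ PhiJ) ⊓ Q = ⊥

namespace LeviData

variable {D : RootData G ι} (LD : LeviData D)

/-- `V⁺`, the subgroup generated by the `U α`, `α ∈ Φ⁺ \ Φ_J`. -/
def Vp : Subgroup G := genU D.U (D.PhiP \ LD.PhiJ)

/-- `V⁻`, the subgroup generated by the `U α`, `α ∈ Φ⁻ \ Φ_J`. -/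
def Vm : Subgroup G := genU D.U (D.PhiM \ LD.PhiJ)

/-- Condition (3.1) with respect to the Levi subgroup `L`. -/
def cond31L (K : Subgroup G) : Prop :=
  Cond31 D.U (LD.PhiJ ∩ D.PhiRed ∩ D.PhiP) (LD.PhiJ ∩ D.PhiRed ∩ D.PhiM)
    (LD.L ⊓ D.Up) (LD.L ⊓ D.Um) (D.N ⊓ LD.L) K

/-- Condition (3.2) with respect to the Levi subgroup `L`. -/
def cond32L (K : Subgroup G) : Prop :=
  Cond32 (LD.L ⊓ D.Up) (LD.L ⊓ D.Um) D.Z K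

end LeviData

end AxiomaticFramework

/-!
Condition (3.1) writes `K_L ∩ U_J^±` as ordered products of the pieces `K_L ∩ U_α`,
`α ∈ Φ_J ∩ Φ_red`, so when these agree with `K ∩ U_α` and `Z ∩ K_L = Z ∩ K`, condition (3.2)
for `K_L` gives `K_L ≤ K`. Conversely, write `g ∈ L ∩ K` as `g = abcz` by (3.2) for `K`, and
factor `a, b, c` by (3.1), enumerating the roots outside `Φ_J` first: `a = v_a u_a`,
`c = v_c u_c`, `b = w_b u_b` with `v_a, v_c ∈ V⁺`, `w_b ∈ V⁻` and `u_a, u_b, u_c, z ∈ K_L`.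
Every factor except `w_b` lies in `Q`, so `w_b ∈ V⁻ ∩ Q = 1`. Moving `v_c` past `m = u_a u_b ∈ L`
gives `g = (v_a · m v_c m⁻¹) · m u_c z`, whose first factor lies in `V⁺ ∩ L = 1`; so `g ∈ K_L`.
-/

section RootFactorization

variable {G : Type*} [Group G] {ι : Type*}

theorem le_genU {U : ι → Subgroup G} {s : Finset ι} {α : ι} (h : α ∈ s) : U α ≤ genU U s :=
  le_iSup₂ (f := fun β (_ : β ∈ s) => U β) α h

theorem List.Forall₂.prod_mem {S : ι → Subgroup G} {w : List G} {l : List ι}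
    (hw : w.Forall₂ (fun g α => g ∈ S α) l) {H : Subgroup G} (hH : ∀ α ∈ l, S α ≤ H) :
    w.prod ∈ H := by
  induction hw with
  | nil => exact H.one_mem
  | cons hg _ ih =>
    rw [List.prod_cons]
    exact H.mul_mem (hH _ List.mem_cons_self hg)
      (ih fun α hα => hH α (List.mem_cons_of_mem _ hα))

theorem List.Forall₂.exists_prod_eq_mul {S : ι → Subgroup G} {w : List G} {l₁ l₂ : List ι}
    (hw : w.Forall₂ (fun g α => g ∈ S α) (l₁ ++ l₂)) {H₁ H₂ : Subgroup G}
    (h₁ : ∀ α ∈ l₁, S α ≤ H₁) (h₂ : ∀ α ∈ l₂, S α ≤ H₂) :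
    ∃ p ∈ H₁, ∃ q ∈ H₂, p * q = w.prod :=
  ⟨_, (List.forall₂_take_append w l₁ l₂ hw).prod_mem h₁,
    _, (List.forall₂_drop_append w l₁ l₂ hw).prod_mem h₂, List.prod_take_mul_prod_drop w _⟩

theorem ProdBij.exists_forall₂ {U : ι → Subgroup G} {K T : Subgroup G} {l : List ι}
    (h : ProdBij U K T l) {a : G} (ha : a ∈ K ⊓ T) :
    ∃ w : List G, w.Forall₂ (fun g α => g ∈ K ⊓ U α) l ∧ w.prod = a := by
  obtain ⟨x, rfl⟩ := h.2.symm.subset ha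
  refine ⟨_, List.forall₂_iff_get.2 ⟨List.length_ofFn, fun i h₁ h₂ => ?_⟩, rfl⟩
  simp only [List.get_eq_getElem, List.getElem_ofFn]
  exact (x ⟨i, h₂⟩).2

variable {U : ι → Subgroup G} {K T : Subgroup G} {s : Finset ι}

theorem inf_le_of_forall_prodBij
    (hK : ∀ l : List ι, l.Nodup → (∀ a, a ∈ l ↔ a ∈ s) → ProdBij U K T l)
    {H : Subgroup G} (hH : ∀ α ∈ s, K ⊓ U α ≤ H) : K ⊓ T ≤ H := by
  intro a ha
  obtain ⟨w, hw, rfl⟩ :=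
    (hK s.toList s.nodup_toList fun _ => Finset.mem_toList).exists_forall₂ ha
  exact hw.prod_mem fun α hα => hH α (Finset.mem_toList.1 hα)

theorem exists_mul_eq_of_forall_prodBij
    (hK : ∀ l : List ι, l.Nodup → (∀ a, a ∈ l ↔ a ∈ s) → ProdBij U K T l) [DecidableEq ι]
    (t : Finset ι) {H₁ H₂ : Subgroup G} (h₁ : ∀ α ∈ s \ t, K ⊓ U α ≤ H₁)
    (h₂ : ∀ α ∈ s ∩ t, K ⊓ U α ≤ H₂) {a : G} (ha : a ∈ K ⊓ T) :
    ∃ p ∈ H₁, ∃ q ∈ H₂, p * q = a := by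
  have hnodup : ((s \ t).toList ++ (s ∩ t).toList).Nodup :=
    (s \ t).nodup_toList.append (s ∩ t).nodup_toList fun α h₁ h₂ =>
      (Finset.mem_sdiff.1 (Finset.mem_toList.1 h₁)).2
        (Finset.mem_inter.1 (Finset.mem_toList.1 h₂)).2
  have hmem : ∀ α, α ∈ (s \ t).toList ++ (s ∩ t).toList ↔ α ∈ s := fun α => by
    simp only [List.mem_append, Finset.mem_toList, Finset.mem_sdiff, Finset.mem_inter]
    tauto
  obtain ⟨w, hw, rfl⟩ := (hK _ hnodup hmem).exists_forall₂ ha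
  exact hw.exists_prod_eq_mul (fun α hα => h₁ α (Finset.mem_toList.1 hα))
    (fun α hα => h₂ α (Finset.mem_toList.1 hα))

theorem Cond32.exists_mul_eq {Up Um Z : Subgroup G} (hK : Cond32 Up Um Z K) {g : G}
    (hg : g ∈ K) :
    ∃ a ∈ K ⊓ Up, ∃ b ∈ K ⊓ Um, ∃ c ∈ K ⊓ Up, ∃ z ∈ K ⊓ Z, a * b * c * z = g := by
  obtain ⟨_, ⟨_, ⟨a, ha, b, hb, rfl⟩, c, hc, rfl⟩, z, hz, rfl⟩ := hK.subset hg
  exact ⟨a, ha, b, hb, c, hc, z, hz, rfl⟩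

theorem Cond32.le {Up Um Z H : Subgroup G} (hK : Cond32 Up Um Z K) (hUp : K ⊓ Up ≤ H)
    (hUm : K ⊓ Um ≤ H) (hZ : K ⊓ Z ≤ H) : K ≤ H := by
  intro g hg
  obtain ⟨a, ha, b, hb, c, hc, z, hz, rfl⟩ := hK.exists_mul_eq hg
  exact H.mul_mem (H.mul_mem (H.mul_mem (hUp ha) (hUm hb)) (hUp hc)) (hZ hz)

end RootFactorization

namespace LeviData

variable {G : Type*} [Group G] {ι : Type*} [DecidableEq ι] {D : RootData G ι} (LD : LeviData D)

theorem L_le_Q : LD.L ≤ LD.Q := fun g hg => by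
  have : g ∈ (LD.Q : Set G) := LD.hQ_VL ▸ Set.mem_mul.2 ⟨1, one_mem _, g, hg, one_mul g⟩
  exact this

theorem Vp_le_Q : LD.Vp ≤ LD.Q := fun g hg => by
  have : g ∈ (LD.Q : Set G) := LD.hQ_VL ▸ Set.mem_mul.2 ⟨g, hg, 1, LD.L.one_mem, mul_one g⟩
  exact this

theorem eq_one_of_mem_Vm_of_mul_eq {g a w u c z : G} (hg : g ∈ LD.L) (ha : a ∈ LD.Q)
    (hw : w ∈ LD.Vm) (hu : u ∈ LD.L) (hc : c ∈ LD.Q) (hz : z ∈ LD.L)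
    (h : a * (w * u) * c * z = g) : w = 1 := by
  have hwQ : w ∈ LD.Q := by
    have : w = a⁻¹ * g * z⁻¹ * c⁻¹ * u⁻¹ := by rw [← h]; group
    rw [this]
    have hLQ := LD.L_le_Q
    exact mul_mem (mul_mem (mul_mem (mul_mem (inv_mem ha) (hLQ hg)) (inv_mem (hLQ hz)))
      (inv_mem hc)) (inv_mem (hLQ hu))
  have : w ∈ LD.Vm ⊓ LD.Q := ⟨hw, hwQ⟩
  rwa [Vm, LD.hVmQ, Subgroup.mem_bot] at this

theorem mem_of_Vp_mul_mul_Vp_mul_eq {H : Subgroup G} (hH : H ≤ LD.L) {g v m v' n : G}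
    (hg : g ∈ LD.L) (hv : v ∈ LD.Vp) (hm : m ∈ H) (hv' : v' ∈ LD.Vp) (hn : n ∈ H)
    (h : v * m * v' * n = g) : g ∈ H := by
  have hsplit : v * (m * v' * m⁻¹) * (m * n) = g := by rw [← h]; group
  have hL : v * (m * v' * m⁻¹) ∈ LD.L := by
    rw [eq_mul_inv_of_mul_eq hsplit]
    exact mul_mem hg (inv_mem (hH (mul_mem hm hn)))
  have hone : v * (m * v' * m⁻¹) ∈ LD.Vp ⊓ LD.L :=
    ⟨mul_mem hv (LD.hLnormV m (hH hm) v' hv'), hL⟩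
  rw [Vp, LD.hVL, Subgroup.mem_bot] at hone
  rw [← hsplit, hone, one_mul]
  exact mul_mem hm hn

variable {K KL : Subgroup G}

theorem le_of_inf_root_eq (hKL31 : LD.cond31L KL) (hKL32 : LD.cond32L KL)
    (hU : ∀ α ∈ LD.PhiJ ∩ D.PhiRed, KL ⊓ D.U α = K ⊓ D.U α) (hZ : D.Z ⊓ KL = D.Z ⊓ K) :
    KL ≤ K := by
  have hroot : ∀ P, ∀ α ∈ LD.PhiJ ∩ D.PhiRed ∩ P, KL ⊓ D.U α ≤ K := fun _ α hα =>
    (hU α (Finset.mem_of_mem_inter_left hα)).le.trans inf_le_left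
  refine hKL32.le (inf_le_of_forall_prodBij hKL31.2.2.1 (hroot _))
    (inf_le_of_forall_prodBij hKL31.2.2.2 (hroot _)) ?_
  calc KL ⊓ D.Z = D.Z ⊓ K := (inf_comm _ _).trans hZ
    _ ≤ K := inf_le_right

theorem inf_le_of_inf_root_eq (hKLle : KL ≤ LD.L) (hK31 : D.cond31 K) (hK32 : D.cond32 K)
    (hU : ∀ α ∈ LD.PhiJ ∩ D.PhiRed, KL ⊓ D.U α = K ⊓ D.U α) (hZ : D.Z ⊓ KL = D.Z ⊓ K) :
    LD.L ⊓ K ≤ KL := by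
  have hJ : ∀ P, ∀ α ∈ (D.PhiRed ∩ P) ∩ LD.PhiJ, K ⊓ D.U α ≤ KL := fun _ α hα => by
    rw [Finset.mem_inter, Finset.mem_inter] at hα
    exact (hU α (Finset.mem_inter.2 ⟨hα.2, hα.1.1⟩)).ge.trans inf_le_left
  have hV : ∀ P, ∀ α ∈ (D.PhiRed ∩ P) \ LD.PhiJ, K ⊓ D.U α ≤ genU D.U (P \ LD.PhiJ) :=
    fun _ α hα => by
      rw [Finset.mem_sdiff, Finset.mem_inter] at hα
      exact inf_le_right.trans (le_genU (Finset.mem_sdiff.2 ⟨hα.1.2, hα.2⟩))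
  rintro g ⟨hgL, hgK⟩
  obtain ⟨a, ha, b, hb, c, hc, z, hz, rfl⟩ := hK32.exists_mul_eq hgK
  obtain ⟨va, hva, ua, hua, rfl⟩ :=
    exists_mul_eq_of_forall_prodBij hK31.2.2.1 LD.PhiJ (hV _) (hJ _) ha
  obtain ⟨vc, hvc, uc, huc, rfl⟩ :=
    exists_mul_eq_of_forall_prodBij hK31.2.2.1 LD.PhiJ (hV _) (hJ _) hc
  obtain ⟨wb, hwb, ub, hub, rfl⟩ :=
    exists_mul_eq_of_forall_prodBij hK31.2.2.2 LD.PhiJ (hV _) (hJ _) hb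
  have hzKL : z ∈ KL := (hZ.symm ▸ ⟨hz.2, hz.1⟩ : z ∈ D.Z ⊓ KL).2
  have mul_mem_Q (v u : G) (hv : v ∈ LD.Vp) (hu : u ∈ KL) : v * u ∈ LD.Q :=
    mul_mem (LD.Vp_le_Q hv) (LD.L_le_Q (hKLle hu))
  obtain rfl : wb = 1 := LD.eq_one_of_mem_Vm_of_mul_eq hgL (mul_mem_Q va ua hva hua) hwb
    (hKLle hub) (mul_mem_Q vc uc hvc huc) (hKLle hzKL) rfl
  exact LD.mem_of_Vp_mul_mul_Vp_mul_eq hKLle hgL hva (mul_mem hua hub) hvc (mul_mem huc hzKL)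
    (by group)

end LeviData

/-- Suppose `K ≤ G` satisfies conditions (3.1) and (3.2) with respect
to `G`, and `K_L ≤ L` satisfies conditions (3.1) and (3.2) with respect to `L`.
Then `L ∩ K = K_L` if and only if `K_L ∩ U_α = K ∩ U_α` for every
`α ∈ Φ_J ∩ Φ_red` and `Z ∩ K_L = Z ∩ K`. -/
theorem stmt5 {G : Type*} [Group G] {ι : Type*} [DecidableEq ι]
    (D : RootData G ι) (LD : LeviData D) (K KL : Subgroup G) (hKLle : KL ≤ LD.L)
    (hK31 : D.cond31 K) (hK32 : D.cond32 K)
    (hKL31 : LD.cond31L KL) (hKL32 : LD.cond32L KL) :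
    LD.L ⊓ K = KL ↔
      ((∀ α ∈ LD.PhiJ ∩ D.PhiRed, KL ⊓ D.U α = K ⊓ D.U α) ∧ D.Z ⊓ KL = D.Z ⊓ K) := by
  constructor
  · rintro rfl
    refine ⟨fun α hα => ?_, ?_⟩
    · rw [inf_right_comm, inf_eq_right.2 (LD.hUL α (Finset.mem_inter.1 hα).1), inf_comm]
    · rw [← inf_assoc, inf_eq_left.2 LD.hZL]
  · rintro ⟨hU, hZ⟩
    exact le_antisymm (LD.inf_le_of_inf_root_eq hKLle hK31 hK32 hU hZ)
      (le_inf hKLle (LD.le_of_inf_root_eq hKL31 hKL32 hU hZ))
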